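/- (Value function identity along equilibrium play.) For all i, t and histories (a_{1:t-1}, x_{1:t}^i): V_t^i(μ*_t[a_{1:t-1}], x_t^i) = E^{β*_{t:T}, μ*_t[a_{1:t-1}]}[ Σ_{n=t}^T R^i(X_n, A_n) | a_{1:t-1}, x_{1:t}^i ], i.e., the backward-recursively defined value function equals player i's expected continuation reward under the equilibrium strategy profile and beliefs, and depends on the private history only through the current type x_t^i. -/
import Mathlib


open scoped Classical BigOperators
open Finset

noncomputable section

namespace SPBE

variable (N T : ℕ) (X A : Fin N → Type)
  [∀ i, Fintype (X i)] [∀ i, Fintype (A i)]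
  [∀ i, Nonempty (X i)] [∀ i, Nonempty (A i)]
  (Q1 : ∀ i, X i → ℝ)
  (Qk : ℕ → ∀ i, X i → (∀ j, A j) → X i → ℝ)
  (R : ∀ _ : Fin N, (∀ j, X j) → (∀ j, A j) → ℝ)
  (θ : ℕ → (∀ j, X j → ℝ) → ∀ j, X j → A j → ℝ)

/-- `π` is a vector of marginal beliefs (a product belief). -/
def IsBelief (π : ∀ j, X j → ℝ) : Prop :=
  ∀ j, (∀ x, 0 ≤ π j x) ∧ (∑ x, π j x) = 1

def KerStoch : Prop :=
  (∀ i, (∀ x, 0 ≤ Q1 i x) ∧ (∑ x, Q1 i x) = 1) ∧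
  (∀ t i x a, (∀ x', 0 ≤ Qk t i x a x') ∧ (∑ x', Qk t i x a x') = 1)

/-- The equilibrium generating function produces prescriptions that are probability
distributions at every (product) belief. -/
def ThetaStoch : Prop :=
  ∀ t π, IsBelief N X π → ∀ j x, (∀ b, 0 ≤ θ t π j x b) ∧ (∑ b, θ t π j x b) = 1

/-- One-player Bayes update `F̄` (kernel `Qk t'` is used for the belief at time `t'`). -/
def Fbar (t' : ℕ) (i : Fin N) (πi : X i → ℝ) (γrow : X i → ℝ) (av : ∀ j, A j) :
    X i → ℝ :=
  fun x' =>
    if 0 < ∑ x, πi x * γrow x then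
      (∑ x, πi x * γrow x * Qk t' i x av x') / (∑ x, πi x * γrow x)
    else ∑ x, πi x * Qk t' i x av x'

/-- Vector Bayes update `F(π, γ, a)` producing the belief at time `t'`. -/
def Fupd (t' : ℕ) (π : ∀ j, X j → ℝ) (γ : ∀ j, X j → A j → ℝ) (av : ∀ j, A j) :
    ∀ j, X j → ℝ :=
  fun j => Fbar N X A Qk t' j (π j) (fun x => γ j x (av j)) av

/-- The backward-recursive value functions `V_t^i(π, x^i)` associated with the
equilibrium generating function `θ` (periods are 0-based, `V_T ≡ 0`). -/
def V : ℕ → (∀ j, X j → ℝ) → ∀ i, X i → ℝ :=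
  fun t π i xi =>
    if h : t < T then
      ∑ x : ∀ j, X j, ∑ a : ∀ j, A j, ∑ xi' : X i,
        (if x i = xi then ∏ j ∈ univ.erase i, π j (x j) else 0) *
        (∏ j, θ t π j (x j) (a j)) *
        Qk (t + 1) i xi a xi' *
        (R i x a + V (t + 1) (Fupd N X A Qk (t + 1) π (θ t π) a) i xi')
    else 0
  termination_by t => T - t
  decreasing_by omega

/-- The stage objective of player `i` with own (possibly deviating) mixed action row `p`,
the others playing `θ_t[π]`, and the continuation evaluated through `V_{t+1}` with the
belief updated by the *equilibrium* prescriptions `θ_t[π]`. -/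
def Obj (t : ℕ) (π : ∀ j, X j → ℝ) (i : Fin N) (xi : X i) (p : A i → ℝ) : ℝ :=
  ∑ x : ∀ j, X j, ∑ a : ∀ j, A j, ∑ xi' : X i,
    (if x i = xi then ∏ j ∈ univ.erase i, π j (x j) else 0) *
    (p (a i) * ∏ j ∈ univ.erase i, θ t π j (x j) (a j)) *
    Qk (t + 1) i xi a xi' *
    (R i x a + V N T X A Qk R θ (t + 1) (Fupd N X A Qk (t + 1) π (θ t π) a) i xi')

/-- The fixed point property defining the equilibrium generating function `θ`:
at every period and every product belief, each player's prescription row maximizes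
the stage objective against the others' prescriptions. -/
def FixedPoint : Prop :=
  ∀ t, t < T → ∀ π, IsBelief N X π → ∀ (i : Fin N) (xi : X i) (p : A i → ℝ),
    (∀ b, 0 ≤ p b) → (∑ b, p b) = 1 →
    Obj N T X A Qk R θ t π i xi p ≤ Obj N T X A Qk R θ t π i xi (θ t π i xi)

/-- The forward belief recursion `μ*`: `μ*_0 = ∏ Q_1^i` and
`μ*_{t+1}[a_{1:t}] = F(μ*_t[a_{1:t-1}], θ_t[μ*_t], a_t)`. -/
def μstar : ℕ → (ℕ → ∀ j, A j) → ∀ j, X j → ℝ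
  | 0, _ => fun j => Q1 j
  | (t + 1), a =>
      Fupd N X A Qk (t + 1) (μstar t a) (θ t (μstar t a)) (a t)

/-- Update a history function at one time point. -/
def upd {α : Type*} (h : ℕ → α) (t : ℕ) (v : α) : ℕ → α :=
  fun s => if s = t then v else h s

/-- The expected continuation reward of player `i` from period `t` on, given the public
history `ah`, its own type history `xh`, the current joint type `xcur` (with
`xcur i = xh t`), when player `i` uses the history-based strategy `βi` and all other
players use the equilibrium strategies `β*` (i.e. `θ` applied to the forward beliefs). -/
def cont (i : Fin N)
    (βi : ℕ → (ℕ → ∀ j, A j) → (ℕ → X i) → A i → ℝ) :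
    ℕ → (ℕ → ∀ j, A j) → (ℕ → X i) → (∀ j, X j) → ℝ :=
  fun t ah xh xcur =>
    if h : t < T then
      ∑ a : ∀ j, A j, ∑ x' : ∀ j, X j,
        (βi t ah xh (a i) *
          ∏ j ∈ univ.erase i, θ t (μstar N X A Q1 Qk θ t ah) j (xcur j) (a j)) *
        (∏ j, Qk (t + 1) j (xcur j) a (x' j)) *
        (R i xcur a + cont i βi (t + 1) (upd ah t a) (upd xh (t + 1) (x' i)) x')
    else 0
  termination_by t => T - t
  decreasing_by omega

/-- The conditional expectation `E^{β^i β*^{-i}, μ}[ Σ_{n=t}^T R^i | a_{1:t-1}, x_{1:t}^i ]`: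
the current types of the other players are drawn from the belief `μ^{-i}` and the game
evolves forward by the kernels and strategies. -/
def contVal (i : Fin N)
    (βi : ℕ → (ℕ → ∀ j, A j) → (ℕ → X i) → A i → ℝ)
    (t : ℕ) (ah : ℕ → ∀ j, A j) (xh : ℕ → X i) (μ : ∀ j, X j → ℝ) : ℝ :=
  ∑ xcur : ∀ j, X j,
    (if xcur i = xh t then ∏ j ∈ univ.erase i, μ j (xcur j) else 0) *
    cont N T X A Q1 Qk R θ i βi t ah xh xcur

/-- Player `i`'s equilibrium strategy `β*^i`, as a history-based strategy. -/
def βeq (i : Fin N) : ℕ → (ℕ → ∀ j, A j) → (ℕ → X i) → A i → ℝ :=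
  fun t ah xh ai => θ t (μstar N X A Q1 Qk θ t ah) i (xh t) ai


lemma sum_pi_factor (i : Fin N) (c : X i → ℝ) (g : ∀ j, X j → ℝ) :
    ∑ x : ∀ j, X j, c (x i) * ∏ j ∈ univ.erase i, g j (x j)
      = (∑ xi, c xi) * ∏ j ∈ univ.erase i, ∑ xj, g j xj := by
  have h1 : ∀ x : ∀ j, X j, c (x i) * ∏ j ∈ univ.erase i, g j (x j)
      = ∏ j, Function.update g i c j (x j) := by
    intro x
    rw [← Finset.mul_prod_erase univ _ (mem_univ i), Function.update_self]
    exact congrArg _ (Finset.prod_congr rfl fun j hj => by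
      rw [Function.update_of_ne (Finset.ne_of_mem_erase hj)])
  simp_rw [h1]
  rw [← Fintype.piFinset_univ, ← Finset.prod_univ_sum,
    ← Finset.mul_prod_erase univ _ (mem_univ i), Function.update_self]
  exact congrArg _ (Finset.prod_congr rfl fun j hj => by
    rw [Function.update_of_ne (Finset.ne_of_mem_erase hj)])

lemma fbar_key (t' : ℕ) (j : Fin N) (πj : X j → ℝ) (hπ : ∀ x, 0 ≤ πj x)
    (row : X j → ℝ) (hrow : ∀ x, 0 ≤ row x) (av : ∀ k, A k) (x' : X j) :
    (∑ x, πj x * row x) * Fbar N X A Qk t' j πj row av x'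
      = ∑ x, πj x * row x * Qk t' j x av x' := by
  unfold Fbar
  by_cases h : 0 < ∑ x, πj x * row x
  · rw [if_pos h, mul_div_cancel₀ _ (ne_of_gt h)]
  · rw [if_neg h]
    have hnn : ∀ x ∈ (univ : Finset (X j)), 0 ≤ πj x * row x :=
      fun x _ => mul_nonneg (hπ x) (hrow x)
    have h0 : ∑ x, πj x * row x = 0 := le_antisymm (not_lt.1 h) (Finset.sum_nonneg hnn)
    have hz := (Finset.sum_eq_zero_iff_of_nonneg hnn).1 h0
    rw [h0, zero_mul]
    exact (Finset.sum_eq_zero fun x _ => by rw [hz x (mem_univ x), zero_mul]).symm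

lemma μstar_congr : ∀ (t : ℕ) (ah ah' : ℕ → ∀ j, A j), (∀ s, s < t → ah s = ah' s) →
    μstar N X A Q1 Qk θ t ah = μstar N X A Q1 Qk θ t ah'
  | 0, _, _, _ => rfl
  | (t+1), ah, ah', h => by
      unfold μstar
      rw [μstar_congr t ah ah' (fun s hs => h s (by omega)), h t (by omega)]

lemma isBelief_μstar (hK : KerStoch N X A Q1 Qk) (hθ : ThetaStoch N X A θ) :
    ∀ (t : ℕ) (ah : ℕ → ∀ j, A j), IsBelief N X (μstar N X A Q1 Qk θ t ah)
  | 0, _ => fun j => hK.1 j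
  | (t+1), ah => by
      have ih := isBelief_μstar hK hθ t ah
      intro j
      set π := μstar N X A Q1 Qk θ t ah with hπdef
      set row : X j → ℝ := fun x => θ t π j x (ah t j) with hrow
      have hrownn : ∀ x, 0 ≤ row x := fun x => (hθ t π ih j x).1 (ah t j)
      have hnn : ∀ x ∈ (univ : Finset (X j)), 0 ≤ π j x * row x :=
        fun x _ => mul_nonneg ((ih j).1 x) (hrownn x)
      show (∀ x, 0 ≤ Fbar N X A Qk (t+1) j (π j) row (ah t) x) ∧
        (∑ x, Fbar N X A Qk (t+1) j (π j) row (ah t) x) = 1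
      unfold Fbar
      by_cases h : 0 < ∑ x, π j x * row x
      · simp only [if_pos h]
        constructor
        · intro x'
          exact div_nonneg (Finset.sum_nonneg fun x _ =>
            mul_nonneg (hnn x (mem_univ x)) ((hK.2 (t+1) j x (ah t)).1 x')) h.le
        · rw [← Finset.sum_div, Finset.sum_comm]
          have : ∀ x ∈ (univ : Finset (X j)),
              ∑ x' : X j, π j x * row x * Qk (t+1) j x (ah t) x' = π j x * row x := by
            intro x _
            rw [← Finset.mul_sum, (hK.2 (t+1) j x (ah t)).2, mul_one]
          rw [Finset.sum_congr rfl this, div_self (ne_of_gt h)]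
      · simp only [if_neg h]
        constructor
        · intro x'
          exact Finset.sum_nonneg fun x _ =>
            mul_nonneg ((ih j).1 x) ((hK.2 (t+1) j x (ah t)).1 x')
        · rw [Finset.sum_comm]
          have : ∀ x ∈ (univ : Finset (X j)),
              ∑ x' : X j, π j x * Qk (t+1) j x (ah t) x' = π j x := by
            intro x _
            rw [← Finset.mul_sum, (hK.2 (t+1) j x (ah t)).2, mul_one]
          rw [Finset.sum_congr rfl this, (ih j).2]

lemma μstar_upd (t : ℕ) (ah : ℕ → ∀ j, A j) (a : ∀ j, A j) :
    μstar N X A Q1 Qk θ (t+1) (upd ah t a)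
      = Fupd N X A Qk (t+1) (μstar N X A Q1 Qk θ t ah)
          (θ t (μstar N X A Q1 Qk θ t ah)) a := by
  have h1 : μstar N X A Q1 Qk θ t (upd ah t a) = μstar N X A Q1 Qk θ t ah :=
    μstar_congr N X A Q1 Qk θ t _ _ (fun s hs => by simp [upd, Nat.ne_of_lt hs])
  show Fupd N X A Qk (t+1) (μstar N X A Q1 Qk θ t (upd ah t a))
      (θ t (μstar N X A Q1 Qk θ t (upd ah t a))) (upd ah t a t) = _
  rw [h1]
  have : upd ah t a t = a := by simp [upd]
  rw [this]



lemma core (i : Fin N)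
    (w : ∀ j, X j → ℝ) (xi : X i)
    (th : ∀ j, X j → A j → ℝ)
    (q : ∀ j, X j → (∀ k, A k) → X j → ℝ)
    (w' : (∀ k, A k) → ∀ j, X j → ℝ)
    (Rf : (∀ j, X j) → (∀ k, A k) → ℝ)
    (C : (∀ k, A k) → X i → (∀ j, X j) → ℝ)
    (hq : ∀ j x a, ∑ x', q j x a x' = 1)
    (hww' : ∀ (a : ∀ k, A k) (j : Fin N) (x' : X j),
      (∑ x, w j x * th j x (a j)) * w' a j x' = ∑ x, w j x * th j x (a j) * q j x a x') :
    (∑ x : ∀ j, X j, ∑ a : ∀ k, A k, ∑ xi' : X i,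
      (if x i = xi then ∏ j ∈ univ.erase i, w j (x j) else 0) *
      (∏ j, th j (x j) (a j)) * q i xi a xi' *
      (Rf x a + ∑ xc : ∀ j, X j,
        (if xc i = xi' then ∏ j ∈ univ.erase i, w' a j (xc j) else 0) * C a xi' xc))
    = ∑ xc : ∀ j, X j,
        (if xc i = xi then ∏ j ∈ univ.erase i, w j (xc j) else 0) *
        ∑ a : ∀ k, A k, ∑ x' : ∀ j, X j,
          (th i xi (a i) * ∏ j ∈ univ.erase i, th j (xc j) (a j)) *
          (∏ j, q j (xc j) a (x' j)) *
          (Rf xc a + C a (x' i) x') := by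
  -- factorization of the belief-weighted sums over joint types
  have hXfac : ∀ a : ∀ k, A k,
      (∑ x : ∀ j, X j, (if x i = xi then ∏ j ∈ univ.erase i, w j (x j) else 0) *
        ∏ j, th j (x j) (a j))
      = th i xi (a i) * ∏ j ∈ univ.erase i, ∑ x, w j x * th j x (a j) := by
    intro a
    have h1 : ∀ x : ∀ j, X j,
        (if x i = xi then ∏ j ∈ univ.erase i, w j (x j) else 0) * ∏ j, th j (x j) (a j)
        = (fun v : X i => if v = xi then th i v (a i) else 0) (x i) *
          ∏ j ∈ univ.erase i, (fun (j : Fin N) (y : X j) => w j y * th j y (a j)) j (x j) := by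
      intro x
      by_cases hx : x i = xi
      · simp only [if_pos hx]
        rw [← Finset.mul_prod_erase univ (fun j => th j (x j) (a j)) (mem_univ i),
          Finset.prod_mul_distrib]
        ring
      · simp [hx]
    rw [Finset.sum_congr rfl fun x _ => h1 x,
      sum_pi_factor N X i (fun v => if v = xi then th i v (a i) else 0)
        (fun j y => w j y * th j y (a j))]
    congr 1
    rw [Finset.sum_ite_eq' univ xi (fun v => th i v (a i)), if_pos (mem_univ xi)]
  have hQfac : ∀ (a : ∀ k, A k) (x' : ∀ j, X j),
      (∑ xc : ∀ j, X j, (if xc i = xi then ∏ j ∈ univ.erase i, w j (xc j) else 0) *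
        (∏ j ∈ univ.erase i, th j (xc j) (a j)) * ∏ j, q j (xc j) a (x' j))
      = q i xi a (x' i) * ∏ j ∈ univ.erase i, ∑ x, w j x * th j x (a j) * q j x a (x' j) := by
    intro a x'
    have h1 : ∀ xc : ∀ j, X j,
        (if xc i = xi then ∏ j ∈ univ.erase i, w j (xc j) else 0) *
          (∏ j ∈ univ.erase i, th j (xc j) (a j)) * ∏ j, q j (xc j) a (x' j)
        = (fun v : X i => if v = xi then q i v a (x' i) else 0) (xc i) *
          ∏ j ∈ univ.erase i,
            (fun (j : Fin N) (y : X j) => w j y * th j y (a j) * q j y a (x' j)) j (xc j) := by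
      intro xc
      by_cases hx : xc i = xi
      · simp only [if_pos hx]
        rw [← Finset.mul_prod_erase univ (fun j => q j (xc j) a (x' j)) (mem_univ i),
          Finset.prod_mul_distrib, Finset.prod_mul_distrib, hx]
        ring
      · simp [hx]
    rw [Finset.sum_congr rfl fun xc _ => h1 xc,
      sum_pi_factor N X i (fun v => if v = xi then q i v a (x' i) else 0)
        (fun j y => w j y * th j y (a j) * q j y a (x' j))]
    congr 1
    rw [Finset.sum_ite_eq' univ xi (fun v => q i v a (x' i)), if_pos (mem_univ xi)]
  have hq1 : ∀ (y : ∀ j, X j) (a : ∀ k, A k),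
      ∑ x' : ∀ j, X j, ∏ j, q j (y j) a (x' j) = 1 := by
    intro y a
    rw [← Fintype.piFinset_univ, ← Finset.prod_univ_sum]
    exact Finset.prod_eq_one fun j _ => hq j (y j) a
  have hprod : ∀ (a : ∀ k, A k) (xc : ∀ j, X j),
      (∏ j ∈ univ.erase i, ∑ x, w j x * th j x (a j)) *
        (∏ j ∈ univ.erase i, w' a j (xc j))
      = ∏ j ∈ univ.erase i, ∑ x, w j x * th j x (a j) * q j x a (xc j) := by
    intro a xc
    rw [← Finset.prod_mul_distrib]
    exact Finset.prod_congr rfl fun j _ => hww' a j (xc j)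
  -- common middle expression
  have hL :
      (∑ x : ∀ j, X j, ∑ a : ∀ k, A k, ∑ xi' : X i,
        (if x i = xi then ∏ j ∈ univ.erase i, w j (x j) else 0) *
        (∏ j, th j (x j) (a j)) * q i xi a xi' *
        (Rf x a + ∑ xc : ∀ j, X j,
          (if xc i = xi' then ∏ j ∈ univ.erase i, w' a j (xc j) else 0) * C a xi' xc))
      = (∑ a : ∀ k, A k, ∑ x : ∀ j, X j,
          (if x i = xi then ∏ j ∈ univ.erase i, w j (x j) else 0) *
          (∏ j, th j (x j) (a j)) * Rf x a)
        + ∑ a : ∀ k, A k, ∑ x' : ∀ j, X j,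
            th i xi (a i) * q i xi a (x' i) *
            (∏ j ∈ univ.erase i, ∑ x, w j x * th j x (a j) * q j x a (x' j)) *
            C a (x' i) x' := by
    have hcollapse : ∀ (x : ∀ j, X j) (a : ∀ k, A k),
        (∑ xi' : X i,
          (if x i = xi then ∏ j ∈ univ.erase i, w j (x j) else 0) *
          (∏ j, th j (x j) (a j)) * q i xi a xi' *
          (Rf x a + ∑ xc : ∀ j, X j,
            (if xc i = xi' then ∏ j ∈ univ.erase i, w' a j (xc j) else 0) * C a xi' xc))
        = (if x i = xi then ∏ j ∈ univ.erase i, w j (x j) else 0) *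
            (∏ j, th j (x j) (a j)) * Rf x a
          + (if x i = xi then ∏ j ∈ univ.erase i, w j (x j) else 0) *
            (∏ j, th j (x j) (a j)) *
            (∑ xc : ∀ j, X j, q i xi a (xc i) *
              (∏ j ∈ univ.erase i, w' a j (xc j)) * C a (xc i) xc) := by
      intro x a
      have h1 : ∀ xi' : X i,
          (if x i = xi then ∏ j ∈ univ.erase i, w j (x j) else 0) *
          (∏ j, th j (x j) (a j)) * q i xi a xi' *
          (Rf x a + ∑ xc : ∀ j, X j,
            (if xc i = xi' then ∏ j ∈ univ.erase i, w' a j (xc j) else 0) * C a xi' xc)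
          = (if x i = xi then ∏ j ∈ univ.erase i, w j (x j) else 0) *
              (∏ j, th j (x j) (a j)) * (q i xi a xi' * Rf x a)
            + (if x i = xi then ∏ j ∈ univ.erase i, w j (x j) else 0) *
              (∏ j, th j (x j) (a j)) *
              (∑ xc : ∀ j, X j, if xc i = xi' then
                q i xi a xi' * (∏ j ∈ univ.erase i, w' a j (xc j)) * C a xi' xc else 0) := by
        intro xi'
        rw [mul_add]
        congr 1
        · ring
        · rw [Finset.mul_sum, Finset.mul_sum]
          refine Finset.sum_congr rfl fun xc _ => ?_
          split_ifs <;> ring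
      rw [Finset.sum_congr rfl fun xi' _ => h1 xi', Finset.sum_add_distrib]
      congr 1
      · rw [← Finset.mul_sum, ← Finset.sum_mul, hq i xi a, one_mul]
      · rw [← Finset.mul_sum]
        congr 1
        rw [Finset.sum_comm]
        refine Finset.sum_congr rfl fun xc _ => ?_
        rw [Finset.sum_ite_eq univ (xc i)
          (fun v => q i xi a v * (∏ j ∈ univ.erase i, w' a j (xc j)) * C a v xc),
          if_pos (mem_univ _)]
    calc
      (∑ x : ∀ j, X j, ∑ a : ∀ k, A k, ∑ xi' : X i,
        (if x i = xi then ∏ j ∈ univ.erase i, w j (x j) else 0) *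
        (∏ j, th j (x j) (a j)) * q i xi a xi' *
        (Rf x a + ∑ xc : ∀ j, X j,
          (if xc i = xi' then ∏ j ∈ univ.erase i, w' a j (xc j) else 0) * C a xi' xc))
        = ∑ x : ∀ j, X j, ∑ a : ∀ k, A k,
            ((if x i = xi then ∏ j ∈ univ.erase i, w j (x j) else 0) *
              (∏ j, th j (x j) (a j)) * Rf x a
            + (if x i = xi then ∏ j ∈ univ.erase i, w j (x j) else 0) *
              (∏ j, th j (x j) (a j)) *
              (∑ xc : ∀ j, X j, q i xi a (xc i) *
                (∏ j ∈ univ.erase i, w' a j (xc j)) * C a (xc i) xc)) :=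
          Finset.sum_congr rfl fun x _ => Finset.sum_congr rfl fun a _ => hcollapse x a
      _ = ∑ a : ∀ k, A k, ∑ x : ∀ j, X j,
            ((if x i = xi then ∏ j ∈ univ.erase i, w j (x j) else 0) *
              (∏ j, th j (x j) (a j)) * Rf x a
            + (if x i = xi then ∏ j ∈ univ.erase i, w j (x j) else 0) *
              (∏ j, th j (x j) (a j)) *
              (∑ xc : ∀ j, X j, q i xi a (xc i) *
                (∏ j ∈ univ.erase i, w' a j (xc j)) * C a (xc i) xc)) := Finset.sum_comm
      _ = _ := by
          rw [← Finset.sum_add_distrib]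
          refine Finset.sum_congr rfl fun a _ => ?_
          rw [Finset.sum_add_distrib]
          congr 1
          calc
            (∑ x : ∀ j, X j,
              (if x i = xi then ∏ j ∈ univ.erase i, w j (x j) else 0) *
              (∏ j, th j (x j) (a j)) *
              (∑ xc : ∀ j, X j, q i xi a (xc i) *
                (∏ j ∈ univ.erase i, w' a j (xc j)) * C a (xc i) xc))
              = (∑ x : ∀ j, X j,
                  (if x i = xi then ∏ j ∈ univ.erase i, w j (x j) else 0) *
                  (∏ j, th j (x j) (a j))) *
                (∑ xc : ∀ j, X j, q i xi a (xc i) *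
                  (∏ j ∈ univ.erase i, w' a j (xc j)) * C a (xc i) xc) :=
              (Finset.sum_mul _ _ _).symm
            _ = (th i xi (a i) * ∏ j ∈ univ.erase i, ∑ x, w j x * th j x (a j)) *
                (∑ xc : ∀ j, X j, q i xi a (xc i) *
                  (∏ j ∈ univ.erase i, w' a j (xc j)) * C a (xc i) xc) := by rw [hXfac a]
            _ = ∑ xc : ∀ j, X j,
                  th i xi (a i) * q i xi a (xc i) *
                  ((∏ j ∈ univ.erase i, ∑ x, w j x * th j x (a j)) *
                    (∏ j ∈ univ.erase i, w' a j (xc j))) * C a (xc i) xc := by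
                rw [Finset.mul_sum]
                exact Finset.sum_congr rfl fun xc _ => by ring
            _ = ∑ x' : ∀ j, X j,
                  th i xi (a i) * q i xi a (x' i) *
                  (∏ j ∈ univ.erase i, ∑ x, w j x * th j x (a j) * q j x a (x' j)) *
                  C a (x' i) x' :=
              Finset.sum_congr rfl fun xc _ => by rw [hprod a xc]
  rw [hL]
  -- now the RHS
  have hR :
      (∑ xc : ∀ j, X j,
        (if xc i = xi then ∏ j ∈ univ.erase i, w j (xc j) else 0) *
        ∑ a : ∀ k, A k, ∑ x' : ∀ j, X j,
          (th i xi (a i) * ∏ j ∈ univ.erase i, th j (xc j) (a j)) *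
          (∏ j, q j (xc j) a (x' j)) *
          (Rf xc a + C a (x' i) x'))
      = (∑ a : ∀ k, A k, ∑ x : ∀ j, X j,
          (if x i = xi then ∏ j ∈ univ.erase i, w j (x j) else 0) *
          (∏ j, th j (x j) (a j)) * Rf x a)
        + ∑ a : ∀ k, A k, ∑ x' : ∀ j, X j,
            th i xi (a i) * q i xi a (x' i) *
            (∏ j ∈ univ.erase i, ∑ x, w j x * th j x (a j) * q j x a (x' j)) *
            C a (x' i) x' := by
    have h2 : ∀ xc : ∀ j, X j,
        (if xc i = xi then ∏ j ∈ univ.erase i, w j (xc j) else 0) *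
        (∑ a : ∀ k, A k, ∑ x' : ∀ j, X j,
          (th i xi (a i) * ∏ j ∈ univ.erase i, th j (xc j) (a j)) *
          (∏ j, q j (xc j) a (x' j)) *
          (Rf xc a + C a (x' i) x'))
        = (∑ a : ∀ k, A k,
            (if xc i = xi then ∏ j ∈ univ.erase i, w j (xc j) else 0) *
            (∏ j, th j (xc j) (a j)) * Rf xc a)
          + ∑ a : ∀ k, A k, ∑ x' : ∀ j, X j,
              ((if xc i = xi then ∏ j ∈ univ.erase i, w j (xc j) else 0) *
                (∏ j ∈ univ.erase i, th j (xc j) (a j)) * (∏ j, q j (xc j) a (x' j))) *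
              (th i xi (a i) * C a (x' i) x') := by
      intro xc
      by_cases hx : xc i = xi
      · simp only [if_pos hx]
        rw [Finset.mul_sum]
        rw [← Finset.sum_add_distrib]
        refine Finset.sum_congr rfl fun a _ => ?_
        rw [Finset.mul_sum]
        have hP : (∏ j, th j (xc j) (a j))
            = th i xi (a i) * ∏ j ∈ univ.erase i, th j (xc j) (a j) := by
          rw [← Finset.mul_prod_erase univ (fun j => th j (xc j) (a j)) (mem_univ i), hx]
        have hsplit : ∀ x' : ∀ j, X j,
            (∏ j ∈ univ.erase i, w j (xc j)) *
              ((th i xi (a i) * ∏ j ∈ univ.erase i, th j (xc j) (a j)) *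
                (∏ j, q j (xc j) a (x' j)) * (Rf xc a + C a (x' i) x'))
            = (∏ j ∈ univ.erase i, w j (xc j)) *
                (∏ j, th j (xc j) (a j)) * Rf xc a * (∏ j, q j (xc j) a (x' j))
              + ((∏ j ∈ univ.erase i, w j (xc j)) *
                  (∏ j ∈ univ.erase i, th j (xc j) (a j)) * (∏ j, q j (xc j) a (x' j))) *
                (th i xi (a i) * C a (x' i) x') := by
          intro x'
          rw [hP]
          ring
        rw [Finset.sum_congr rfl fun x' _ => hsplit x', Finset.sum_add_distrib]
        congr 1
        rw [← Finset.mul_sum, hq1 xc a, mul_one]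
      · simp [hx]
    calc
      (∑ xc : ∀ j, X j,
        (if xc i = xi then ∏ j ∈ univ.erase i, w j (xc j) else 0) *
        ∑ a : ∀ k, A k, ∑ x' : ∀ j, X j,
          (th i xi (a i) * ∏ j ∈ univ.erase i, th j (xc j) (a j)) *
          (∏ j, q j (xc j) a (x' j)) *
          (Rf xc a + C a (x' i) x'))
        = ∑ xc : ∀ j, X j,
            ((∑ a : ∀ k, A k,
              (if xc i = xi then ∏ j ∈ univ.erase i, w j (xc j) else 0) *
              (∏ j, th j (xc j) (a j)) * Rf xc a)
            + ∑ a : ∀ k, A k, ∑ x' : ∀ j, X j,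
                ((if xc i = xi then ∏ j ∈ univ.erase i, w j (xc j) else 0) *
                  (∏ j ∈ univ.erase i, th j (xc j) (a j)) * (∏ j, q j (xc j) a (x' j))) *
                (th i xi (a i) * C a (x' i) x')) :=
          Finset.sum_congr rfl fun xc _ => h2 xc
      _ = _ := by
          rw [Finset.sum_add_distrib]
          congr 1
          · exact Finset.sum_comm
          · calc
              (∑ xc : ∀ j, X j, ∑ a : ∀ k, A k, ∑ x' : ∀ j, X j,
                ((if xc i = xi then ∏ j ∈ univ.erase i, w j (xc j) else 0) *
                  (∏ j ∈ univ.erase i, th j (xc j) (a j)) * (∏ j, q j (xc j) a (x' j))) *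
                (th i xi (a i) * C a (x' i) x'))
                = ∑ a : ∀ k, A k, ∑ xc : ∀ j, X j, ∑ x' : ∀ j, X j,
                    ((if xc i = xi then ∏ j ∈ univ.erase i, w j (xc j) else 0) *
                      (∏ j ∈ univ.erase i, th j (xc j) (a j)) * (∏ j, q j (xc j) a (x' j))) *
                    (th i xi (a i) * C a (x' i) x') := Finset.sum_comm
              _ = ∑ a : ∀ k, A k, ∑ x' : ∀ j, X j, ∑ xc : ∀ j, X j,
                    ((if xc i = xi then ∏ j ∈ univ.erase i, w j (xc j) else 0) *
                      (∏ j ∈ univ.erase i, th j (xc j) (a j)) * (∏ j, q j (xc j) a (x' j))) *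
                    (th i xi (a i) * C a (x' i) x') :=
                Finset.sum_congr rfl fun a _ => Finset.sum_comm
              _ = ∑ a : ∀ k, A k, ∑ x' : ∀ j, X j,
                    th i xi (a i) * q i xi a (x' i) *
                    (∏ j ∈ univ.erase i, ∑ x, w j x * th j x (a j) * q j x a (x' j)) *
                    C a (x' i) x' := by
                  refine Finset.sum_congr rfl fun a _ => Finset.sum_congr rfl fun x' _ => ?_
                  rw [← Finset.sum_mul, hQfac a x']
                  ring
  rw [hR]


/-- value function identity along equilibrium play: the
backward-recursively defined value function evaluated at the forward beliefs equals the
expected continuation reward under the equilibrium strategies and beliefs; in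
particular the latter depends on player `i`'s private history only through the current
type `xh t`. -/
theorem value_function_identity
    (hK : KerStoch N X A Q1 Qk)
    (hθ : ThetaStoch N X A θ)
    (hFP : FixedPoint N T X A Qk R θ) :
    ∀ (i : Fin N) (t : ℕ), t ≤ T →
    ∀ (ah : ℕ → ∀ j, A j) (xh : ℕ → X i),
      V N T X A Qk R θ t (μstar N X A Q1 Qk θ t ah) i (xh t)
        = contVal N T X A Q1 Qk R θ i (βeq N X A Q1 Qk θ i) t ah xh
            (μstar N X A Q1 Qk θ t ah) := by
  intro i
  suffices H : ∀ n t, t ≤ T → T - t = n → ∀ (ah : ℕ → ∀ j, A j) (xh : ℕ → X i),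
      V N T X A Qk R θ t (μstar N X A Q1 Qk θ t ah) i (xh t)
        = contVal N T X A Q1 Qk R θ i (βeq N X A Q1 Qk θ i) t ah xh
            (μstar N X A Q1 Qk θ t ah) by
    exact fun t ht ah xh => H (T - t) t ht rfl ah xh
  intro n
  induction n with
  | zero =>
      intro t ht hn ah xh
      rw [V, dif_neg (show ¬ t < T by omega)]
      exact (Finset.sum_eq_zero fun xc _ => by
        rw [cont, dif_neg (show ¬ t < T by omega), mul_zero]).symm
  | succ n IH =>
      intro t ht hn ah xh
      have htT : t < T := by omega
      have hπb : IsBelief N X (μstar N X A Q1 Qk θ t ah) :=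
        isBelief_μstar N X A Q1 Qk θ hK hθ t ah
      have hIH : ∀ (a : ∀ k, A k) (xi' : X i),
          V N T X A Qk R θ (t+1)
            (Fupd N X A Qk (t+1) (μstar N X A Q1 Qk θ t ah)
              (θ t (μstar N X A Q1 Qk θ t ah)) a) i xi'
            = ∑ xc : ∀ j, X j,
                (if xc i = xi' then ∏ j ∈ univ.erase i,
                  Fupd N X A Qk (t+1) (μstar N X A Q1 Qk θ t ah)
                    (θ t (μstar N X A Q1 Qk θ t ah)) a j (xc j) else 0) *
                cont N T X A Q1 Qk R θ i (βeq N X A Q1 Qk θ i) (t+1)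
                  (upd ah t a) (upd xh (t+1) xi') xc := by
        intro a xi'
        have hμ := μstar_upd N X A Q1 Qk θ t ah a
        have h2 := IH (t+1) (by omega) (by omega) (upd ah t a) (upd xh (t+1) xi')
        rw [hμ] at h2
        have hx : upd xh (t+1) xi' (t+1) = xi' := by simp [upd]
        rw [hx] at h2
        rw [h2]
        unfold contVal
        rw [hx]
      have hcont : ∀ xc : ∀ j, X j,
          cont N T X A Q1 Qk R θ i (βeq N X A Q1 Qk θ i) t ah xh xc
            = ∑ a : ∀ k, A k, ∑ x' : ∀ j, X j,
                (θ t (μstar N X A Q1 Qk θ t ah) i (xh t) (a i) *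
                  ∏ j ∈ univ.erase i, θ t (μstar N X A Q1 Qk θ t ah) j (xc j) (a j)) *
                (∏ j, Qk (t+1) j (xc j) a (x' j)) *
                (R i xc a + cont N T X A Q1 Qk R θ i (βeq N X A Q1 Qk θ i) (t+1)
                  (upd ah t a) (upd xh (t+1) (x' i)) x') := by
        intro xc
        rw [cont, dif_pos htT]
        rfl
      rw [V, dif_pos htT]
      simp only [hIH]
      unfold contVal
      simp only [hcont]
      exact core N X A i (μstar N X A Q1 Qk θ t ah) (xh t)
        (θ t (μstar N X A Q1 Qk θ t ah))
        (fun j x a x' => Qk (t+1) j x a x')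
        (fun a => Fupd N X A Qk (t+1) (μstar N X A Q1 Qk θ t ah)
          (θ t (μstar N X A Q1 Qk θ t ah)) a)
        (R i)
        (fun a xi' xc => cont N T X A Q1 Qk R θ i (βeq N X A Q1 Qk θ i) (t+1)
          (upd ah t a) (upd xh (t+1) xi') xc)
        (fun j x a => (hK.2 (t+1) j x a).2)
        (fun a j x' => fbar_key N X A Qk (t+1) j (μstar N X A Q1 Qk θ t ah j)
          ((hπb j).1) (fun x => θ t (μstar N X A Q1 Qk θ t ah) j x (a j))
          (fun x => (hθ t (μstar N X A Q1 Qk θ t ah) hπb j x).1 (a j)) a x')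

end SPBE
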